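/- Under the hypotheses of the noisy randomized Kaczmarz theorem, the squared-error bound 𝔼‖x*_k - x‖² ≤ (1 - 1/R)^k ‖x₀ - x‖² + R γ² holds, where γ = max_i |r_i|/‖a_i‖ and R = ‖A⁻¹‖² ‖A‖_F². -/

import Mathlib

/-!
Write `e` for the error of the current iterate. Projecting onto the perturbed hyperplane of row `i`
changes `‖e‖²` by `(rᵢ² - ⟨aᵢ, e⟩²) / ‖aᵢ‖²`, so averaging over the rows with weights
`‖aᵢ‖² / ‖A‖_F²` gives the exact one-step identity `𝔼‖e'‖² = ‖e‖² + (‖r‖² - ‖Ae‖²) / ‖A‖_F²`.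
Since `‖e‖ ≤ ‖A⁻¹‖ ‖Ae‖` and `rᵢ² ≤ γ² ‖aᵢ‖²`, this is at most `(1 - 1/R) ‖e‖² + γ²`.
Iterating, the noise terms form a geometric series bounded by `γ² / (1 - (1 - 1/R)) = R γ²`.
-/

open Finset

noncomputable def eucNorm {k : ℕ} (v : Fin k → ℝ) : ℝ := Real.sqrt (∑ j, v j ^ 2)

noncomputable def ip {k : ℕ} (v w : Fin k → ℝ) : ℝ := ∑ j, v j * w j

noncomputable def frob {m n : ℕ} (A : Matrix (Fin m) (Fin n) ℝ) : ℝ :=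
  Real.sqrt (∑ i, ∑ j, A i j ^ 2)

/-- `‖A⁻¹‖ = inf {M : M‖Az‖ ≥ ‖z‖ for all z}`. -/
noncomputable def invNorm {m n : ℕ} (A : Matrix (Fin m) (Fin n) ℝ) : ℝ :=
  sInf {M : ℝ | ∀ z : Fin n → ℝ, eucNorm z ≤ M * eucNorm (A.mulVec z)}

/-- Kaczmarz iteration driven by a list of row indices (head = last step):
each step orthogonally projects onto the hyperplane `{z : ⟨a_i, z⟩ = c i}`. -/
noncomputable def kIter {m n : ℕ} (A : Matrix (Fin m) (Fin n) ℝ) (c : Fin m → ℝ)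
    (x0 : Fin n → ℝ) : List (Fin m) → (Fin n → ℝ)
  | [] => x0
  | i :: l => kIter A c x0 l + ((c i - ip (A i) (kIter A c x0 l)) / eucNorm (A i) ^ 2) • A i

open scoped Matrix

section EuclideanNorm

variable {k : ℕ}

lemma eucNorm_nonneg (v : Fin k → ℝ) : 0 ≤ eucNorm v := Real.sqrt_nonneg _

lemma eucNorm_sq (v : Fin k → ℝ) : eucNorm v ^ 2 = ∑ j, v j ^ 2 :=
  Real.sq_sqrt (sum_nonneg fun _ _ => sq_nonneg _)

lemma eucNorm_pos {v : Fin k → ℝ} (hv : v ≠ 0) : 0 < eucNorm v := by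
  obtain ⟨j, hj⟩ := Function.ne_iff.mp hv
  exact Real.sqrt_pos.2
    (sum_pos' (fun _ _ => sq_nonneg _) ⟨j, mem_univ j, pow_two_pos_of_ne_zero hj⟩)

lemma eucNorm_pi_single (j : Fin k) : eucNorm (Pi.single j (1 : ℝ)) = 1 := by
  simp [eucNorm, Pi.single_apply]

lemma norm_toLp_eq_eucNorm (v : Fin k → ℝ) : ‖WithLp.toLp 2 v‖ = eucNorm v := by
  simp [EuclideanSpace.norm_eq, eucNorm]

lemma ip_sub (v u w : Fin k → ℝ) : ip v (u - w) = ip v u - ip v w := by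
  simp [ip, mul_sub, sum_sub_distrib]

lemma eucNorm_add_smul_sq (u v : Fin k → ℝ) (t : ℝ) :
    eucNorm (u + t • v) ^ 2 = eucNorm u ^ 2 + 2 * t * ip v u + t ^ 2 * eucNorm v ^ 2 := by
  simp only [eucNorm_sq, ip, Pi.add_apply, Pi.smul_apply, smul_eq_mul, mul_sum, ← sum_add_distrib]
  exact sum_congr rfl fun _ _ => by ring

end EuclideanNorm

section MatrixNorms

variable {m n : ℕ} (A : Matrix (Fin m) (Fin n) ℝ)

lemma frob_nonneg : 0 ≤ frob A := Real.sqrt_nonneg _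

lemma frob_sq : frob A ^ 2 = ∑ i, eucNorm (A i) ^ 2 := by
  rw [frob, Real.sq_sqrt (by positivity)]
  exact sum_congr rfl fun i _ => (eucNorm_sq (A i)).symm

lemma eucNorm_mulVec_sq (z : Fin n → ℝ) : eucNorm (A *ᵥ z) ^ 2 = ∑ i, ip (A i) z ^ 2 :=
  eucNorm_sq _

lemma eucNorm_mulVec_le (z : Fin n → ℝ) : eucNorm (A *ᵥ z) ≤ frob A * eucNorm z := by
  rw [← pow_le_pow_iff_left₀ (eucNorm_nonneg _) (mul_nonneg (frob_nonneg A) (eucNorm_nonneg z))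
    two_ne_zero, mul_pow, eucNorm_mulVec_sq, frob_sq, sum_mul]
  refine sum_le_sum fun i _ => ?_
  rw [eucNorm_sq, eucNorm_sq]
  exact sum_mul_sq_le_sq_mul_sq _ _ _

lemma exists_eucNorm_le_mul_eucNorm_mulVec (hrank : A.rank = n) :
    ∃ M : ℝ, ∀ z, eucNorm z ≤ M * eucNorm (A *ᵥ z) := by
  have hinj : Function.Injective A.mulVec :=
    Matrix.mulVec_injective_iff.mpr (linearIndependent_iff_card_eq_finrank_span.mpr
      (by rw [Fintype.card_fin, Set.finrank, ← Matrix.rank_eq_finrank_span_cols, hrank]))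
  have hker : LinearMap.ker (Matrix.toLpLin 2 2 A) = ⊥ :=
    LinearMap.ker_eq_bot.mpr fun u v huv =>
      WithLp.ofLp_injective 2 (hinj (congrArg WithLp.ofLp huv))
  obtain ⟨K, -, hK⟩ := (Matrix.toLpLin 2 2 A).exists_antilipschitzWith hker
  refine ⟨K, fun z => ?_⟩
  simpa [norm_toLp_eq_eucNorm] using hK.le_mul_dist (WithLp.toLp 2 z) 0

lemma eucNorm_le_invNorm_mul (hrank : A.rank = n) (z : Fin n → ℝ) :
    eucNorm z ≤ invNorm A * eucNorm (A *ᵥ z) := by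
  rcases eq_or_ne z 0 with rfl | hz
  · simp [eucNorm]
  set S := {M : ℝ | ∀ z : Fin n → ℝ, eucNorm z ≤ M * eucNorm (A *ᵥ z)}
  have hclosed : IsClosed S := by
    simp only [S, Set.ofPred_forall]
    exact isClosed_iInter fun z => isClosed_le continuous_const (continuous_id.mul continuous_const)
  have hbdd : BddBelow S := ⟨0, fun M hM =>
    (pos_of_mul_pos_left ((eucNorm_pos hz).trans_le (hM z)) (eucNorm_nonneg _)).le⟩
  exact hclosed.csInf_mem (exists_eucNorm_le_mul_eucNorm_mulVec A hrank) hbdd z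

lemma one_le_invNorm_sq_mul_frob_sq (hn : 0 < n) (hrank : A.rank = n) :
    1 ≤ invNorm A ^ 2 * frob A ^ 2 := by
  set e : Fin n → ℝ := Pi.single ⟨0, hn⟩ 1
  have h := eucNorm_le_invNorm_mul A hrank e
  rw [eucNorm_pi_single] at h
  have hI : 0 < invNorm A := pos_of_mul_pos_left (one_pos.trans_le h) (eucNorm_nonneg _)
  have h1 : 1 ≤ invNorm A * frob A :=
    calc 1 ≤ invNorm A * eucNorm (A *ᵥ e) := h
      _ ≤ invNorm A * frob A := by
        gcongr
        simpa [e, eucNorm_pi_single] using eucNorm_mulVec_le A e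
  rw [← mul_pow]
  exact one_le_pow₀ h1

end MatrixNorms

lemma sum_sq_le_iSup_abs_div_sq_mul {ι : Type*} [Fintype ι] (u v : ι → ℝ) (hv : ∀ i, 0 < v i) :
    ∑ i, u i ^ 2 ≤ (⨆ i, |u i| / v i) ^ 2 * ∑ i, v i ^ 2 := by
  rw [mul_sum]
  refine sum_le_sum fun i _ => ?_
  have h : |u i| ≤ (⨆ i, |u i| / v i) * v i :=
    (div_le_iff₀ (hv i)).1 (le_ciSup (f := fun i => |u i| / v i) (Set.finite_range _).bddAbove i)
  simpa only [sq_abs, mul_pow] using pow_le_pow_left₀ (abs_nonneg _) h 2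

lemma sum_prod_mul_ofFn_succ {ι R : Type*} [Fintype ι] [CommSemiring R] (p : ι → R)
    (V : List ι → R) (k : ℕ) :
    ∑ f : Fin (k + 1) → ι, (∏ j, p (f j)) * V (List.ofFn f) =
      ∑ g : Fin k → ι, (∏ j, p (g j)) * ∑ i, p i * V (i :: List.ofFn g) := by
  rw [← (Fin.consEquiv fun _ => ι).sum_comp, Fintype.sum_prod_type, sum_comm]
  refine sum_congr rfl fun g _ => ?_
  simp [Fin.prod_univ_succ, List.ofFn_succ, mul_sum, mul_left_comm, mul_assoc]

/-- For a probability vector `p`, the left-hand side is the expectation of `V` over words of `k`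
independent letters with law `p`. -/
lemma sum_prod_mul_ofFn_le_geom_sum {ι : Type*} [Fintype ι] {p : ι → ℝ} (hp : ∀ i, 0 ≤ p i)
    (hp1 : ∑ i, p i = 1) {V : List ι → ℝ} {q c : ℝ} (hq : 0 ≤ q)
    (hV : ∀ l, ∑ i, p i * V (i :: l) ≤ q * V l + c) (k : ℕ) :
    ∑ f : Fin k → ι, (∏ j, p (f j)) * V (List.ofFn f) ≤
      q ^ k * V [] + c * ∑ j ∈ range k, q ^ j := by
  induction k with
  | zero => simp
  | succ k ih =>
    have hmass : ∑ g : Fin k → ι, ∏ j, p (g j) = 1 := by rw [← Fintype.sum_pow, hp1, one_pow]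
    calc _ = ∑ g : Fin k → ι, (∏ j, p (g j)) * ∑ i, p i * V (i :: List.ofFn g) :=
          sum_prod_mul_ofFn_succ p V k
      _ ≤ ∑ g : Fin k → ι, (∏ j, p (g j)) * (q * V (List.ofFn g) + c) :=
          sum_le_sum fun g _ => mul_le_mul_of_nonneg_left (hV _) (prod_nonneg fun j _ => hp _)
      _ = q * ∑ g : Fin k → ι, (∏ j, p (g j)) * V (List.ofFn g) + c := by
          simp only [mul_add, sum_add_distrib, ← sum_mul, hmass, one_mul, mul_sum]
          exact congrArg (· + c) (sum_congr rfl fun _ _ => by ring)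
      _ ≤ q * (q ^ k * V [] + c * ∑ j ∈ range k, q ^ j) + c := by gcongr
      _ = q ^ (k + 1) * V [] + c * ∑ j ∈ range (k + 1), q ^ j := by rw [geom_sum_succ]; ring

section Kaczmarz

variable {m n : ℕ} (A : Matrix (Fin m) (Fin n) ℝ)

lemma frob_sq_pos (hm : 0 < m) (hrows : ∀ i, A i ≠ 0) : 0 < frob A ^ 2 := by
  rw [frob_sq]
  exact sum_pos (fun i _ => pow_pos (eucNorm_pos (hrows i)) 2) ⟨⟨0, hm⟩, mem_univ _⟩

lemma eucNorm_project_sub_sq {a x : Fin n → ℝ} (ha : a ≠ 0) {β : ℝ} (hx : ip a x = β)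
    (ρ : ℝ) (y : Fin n → ℝ) :
    eucNorm (y + ((β + ρ - ip a y) / eucNorm a ^ 2) • a - x) ^ 2 =
      eucNorm (y - x) ^ 2 + (ρ ^ 2 - ip a (y - x) ^ 2) / eucNorm a ^ 2 := by
  have ha2 := (pow_pos (eucNorm_pos ha) 2).ne'
  rw [add_sub_right_comm, eucNorm_add_smul_sq, ip_sub, hx]
  field_simp
  ring

lemma pos_of_row_ne_zero {i : Fin m} (h : A i ≠ 0) : 0 < n :=
  Nat.pos_of_ne_zero (by rintro rfl; exact h (Subsingleton.elim _ _))

variable {x : Fin n → ℝ} {b : Fin m → ℝ}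

lemma sum_weight_mul_eucNorm_kIter_cons_sub_sq (hm : 0 < m) (hrows : ∀ i, A i ≠ 0)
    (hb : ∀ i, ip (A i) x = b i) (r : Fin m → ℝ) (x0 : Fin n → ℝ) (l : List (Fin m)) :
    ∑ i, eucNorm (A i) ^ 2 / frob A ^ 2 *
        eucNorm (kIter A (fun i => b i + r i) x0 (i :: l) - x) ^ 2 =
      eucNorm (kIter A (fun i => b i + r i) x0 l - x) ^ 2 +
        (eucNorm r ^ 2 - eucNorm (A *ᵥ (kIter A (fun i => b i + r i) x0 l - x)) ^ 2) /
          frob A ^ 2 := by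
  have hF := (frob_sq_pos A hm hrows).ne'
  have hweight : ∑ i, eucNorm (A i) ^ 2 / frob A ^ 2 = 1 := by
    rw [← sum_div, ← frob_sq, div_self hF]
  simp only [kIter, eucNorm_project_sub_sq (hrows _) (hb _)]
  set e := kIter A (fun i => b i + r i) x0 l - x
  calc _ = ∑ i, (eucNorm (A i) ^ 2 / frob A ^ 2 * eucNorm e ^ 2 +
          (r i ^ 2 - ip (A i) e ^ 2) / frob A ^ 2) :=
        sum_congr rfl fun i _ => by
          have := (eucNorm_pos (hrows i)).ne'
          field_simp
    _ = _ := by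
      rw [sum_add_distrib, ← sum_mul, hweight, one_mul, ← sum_div, sum_sub_distrib, eucNorm_sq r,
        eucNorm_mulVec_sq]

lemma sum_weight_mul_eucNorm_kIter_cons_sub_sq_le (hrank : A.rank = n) (hm : 0 < m)
    (hrows : ∀ i, A i ≠ 0) (hb : ∀ i, ip (A i) x = b i) (r : Fin m → ℝ) (x0 : Fin n → ℝ)
    (l : List (Fin m)) :
    ∑ i, eucNorm (A i) ^ 2 / frob A ^ 2 *
        eucNorm (kIter A (fun i => b i + r i) x0 (i :: l) - x) ^ 2 ≤
      (1 - 1 / (invNorm A ^ 2 * frob A ^ 2)) *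
          eucNorm (kIter A (fun i => b i + r i) x0 l - x) ^ 2 +
        (⨆ i, |r i| / eucNorm (A i)) ^ 2 := by
  rw [sum_weight_mul_eucNorm_kIter_cons_sub_sq A hm hrows hb]
  set e := kIter A (fun i => b i + r i) x0 l - x
  have hF := frob_sq_pos A hm hrows
  have hR := one_le_invNorm_sq_mul_frob_sq A (pos_of_row_ne_zero A (hrows ⟨0, hm⟩)) hrank
  have herr :
      eucNorm e ^ 2 / (invNorm A ^ 2 * frob A ^ 2) ≤ eucNorm (A *ᵥ e) ^ 2 / frob A ^ 2 := by
    rw [div_le_div_iff₀ (one_pos.trans_le hR) hF]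
    have h := pow_le_pow_left₀ (eucNorm_nonneg e) (eucNorm_le_invNorm_mul A hrank e) 2
    calc eucNorm e ^ 2 * frob A ^ 2 ≤ (invNorm A * eucNorm (A *ᵥ e)) ^ 2 * frob A ^ 2 := by gcongr
      _ = _ := by ring
  have hnoise : eucNorm r ^ 2 / frob A ^ 2 ≤ (⨆ i, |r i| / eucNorm (A i)) ^ 2 := by
    rw [div_le_iff₀ hF, eucNorm_sq, frob_sq]
    exact sum_sq_le_iSup_abs_div_sq_mul r _ fun i => eucNorm_pos (hrows i)
  rw [sub_div, sub_mul, one_mul, div_mul_eq_mul_div, one_mul]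
  linarith

end Kaczmarz

/-- Noisy randomized Kaczmarz: expected squared error after `k` steps. -/
theorem stmt_9 (m n : ℕ) (A : Matrix (Fin m) (Fin n) ℝ) (hrank : A.rank = n)
    (hrows : ∀ i, A i ≠ 0) (x x0 : Fin n → ℝ) (b r : Fin m → ℝ)
    (hb : ∀ i, ip (A i) x = b i) (k : ℕ) :
    ∑ f : Fin k → Fin m, (∏ j, eucNorm (A (f j)) ^ 2 / frob A ^ 2) *
        eucNorm (kIter A (fun i => b i + r i) x0 (List.ofFn f) - x) ^ 2 ≤
      (1 - 1 / (invNorm A ^ 2 * frob A ^ 2)) ^ k * eucNorm (x0 - x) ^ 2 +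
        (invNorm A ^ 2 * frob A ^ 2) * (⨆ i, |r i| / eucNorm (A i)) ^ 2 := by
  obtain rfl | hm := m.eq_zero_or_pos
  · cases k <;> simp [kIter, frob, eucNorm_nonneg]
  set R := invNorm A ^ 2 * frob A ^ 2
  have hR : 1 ≤ R :=
    one_le_invNorm_sq_mul_frob_sq A (pos_of_row_ne_zero A (hrows ⟨0, hm⟩)) hrank
  have hq : 0 ≤ 1 - 1 / R := sub_nonneg.2 ((div_le_one (by positivity)).2 hR)
  have hq1 : 1 - 1 / R < 1 := sub_lt_self 1 (by positivity)
  have hF := frob_sq_pos A hm hrows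
  calc _ ≤ (1 - 1 / R) ^ k * eucNorm (x0 - x) ^ 2 +
        (⨆ i, |r i| / eucNorm (A i)) ^ 2 * ∑ j ∈ range k, (1 - 1 / R) ^ j :=
        sum_prod_mul_ofFn_le_geom_sum (p := fun i => eucNorm (A i) ^ 2 / frob A ^ 2)
          (V := fun l => eucNorm (kIter A (fun i => b i + r i) x0 l - x) ^ 2)
          (fun i => by positivity)
          (by rw [← sum_div, ← frob_sq, div_self hF.ne']) hq
          (sum_weight_mul_eucNorm_kIter_cons_sub_sq_le A hrank hm hrows hb r x0) k
    _ ≤ (1 - 1 / R) ^ k * eucNorm (x0 - x) ^ 2 +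
        (⨆ i, |r i| / eucNorm (A i)) ^ 2 * (1 / (1 - (1 - 1 / R))) := by
      gcongr
      simpa [← range_eq_Ico] using geom_sum_Ico_le_of_lt_one (m := 0) (n := k) hq hq1
    _ = _ := by rw [sub_sub_cancel, one_div_one_div, mul_comm R]
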